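/- arXiv:2401.00166 — 6 statements merged into one kernel-verified Lean document; each statement's English description precedes it below -/
import Mathlib

section
/- Consider the block-level SB slot-variant problem: maximize t over tuples (x_1,…,x_{N_s}, t) with x_i ∈ ℂ^{N_t} subject to CI_i(x_i, t) for all i = 1,…,N_s and ∑_{i=1}^{N_s} ‖x_i‖² ≤ P, where P > 0. If (x_1,…,x_{N_s}, t*) is an optimal solution of this problem (i.e., feasible, and every feasible tuple has its last coordinate ≤ t*) and t* > 0, then the power constraint is active at the optimum: ∑_{i=1}^{N_s} ‖x_i‖² = P. -/
open scoped BigOperators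

/-- The constructive-interference (CI) constraint in a given symbol slot:
`CI Nt Nr M h s γ σ x t` holds iff for every user `k`,
`Re((h_kᵀ x)/s_k) − |Im((h_kᵀ x)/s_k)| / tan(π/M) ≥ t·√(γ_k)·σ`. -/
noncomputable def CI (Nt Nr M : ℕ) (h : Fin Nr → Fin Nt → ℂ)
    (s : Fin Nr → ℂ) (γ : Fin Nr → ℝ) (σ : ℝ)
    (x : Fin Nt → ℂ) (t : ℝ) : Prop :=
  ∀ k : Fin Nr,
    ((∑ j, h k j * x j) / s k).re -
        |((∑ j, h k j * x j) / s k).im| / Real.tan (Real.pi / M) ≥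
      t * Real.sqrt (γ k) * σ

/-! The CI constraints are positively homogeneous in `(x, t)`, while the power is quadratic in
`x`. So if the power budget were slack at an optimum `(x, t*)` with `t* > 0`, scaling `x` by
some `c > 1` would stay within budget and satisfy the CI constraints at level `c t* > t*`. -/

lemma Complex.re_sub_abs_im_div_real_mul {c : ℝ} (hc : 0 ≤ c) (z : ℂ) (T : ℝ) :
    ((c : ℂ) * z).re - |((c : ℂ) * z).im| / T = c * (z.re - |z.im| / T) := by
  rw [Complex.re_ofReal_mul, Complex.im_ofReal_mul, abs_mul, abs_of_nonneg hc]
  ring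

lemma CI.smul {Nt Nr M : ℕ} {h : Fin Nr → Fin Nt → ℂ} {s : Fin Nr → ℂ} {γ : Fin Nr → ℝ}
    {σ : ℝ} {x : Fin Nt → ℂ} {t c : ℝ} (hx : CI Nt Nr M h s γ σ x t) (hc : 0 ≤ c) :
    CI Nt Nr M h s γ σ (c • x) (c * t) := by
  intro k
  have hsum : ∑ j, h k j * (c • x) j = (c : ℂ) * ∑ j, h k j * x j := by
    rw [Finset.mul_sum]
    refine Finset.sum_congr rfl fun j _ => ?_
    rw [Pi.smul_apply, Complex.real_smul]
    ring
  rw [hsum, mul_div_assoc, Complex.re_sub_abs_im_div_real_mul hc, mul_assoc, mul_assoc,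
    ge_iff_le, ← mul_assoc t]
  exact mul_le_mul_of_nonneg_left (hx k) hc

lemma Finset.sum_sum_norm_smul_sq {ι κ E : Type*} [Fintype ι] [Fintype κ]
    [SeminormedAddCommGroup E] [NormedSpace ℝ E] (c : ℝ) (y : ι → κ → E) :
    ∑ i, ∑ j, ‖(c • y) i j‖ ^ 2 = c ^ 2 * ∑ i, ∑ j, ‖y i j‖ ^ 2 := by
  simp only [Pi.smul_apply, norm_smul, mul_pow, Real.norm_eq_abs, sq_abs, Finset.mul_sum]

lemma exists_one_lt_sq_mul_le {S P : ℝ} (hS : 0 ≤ S) (hSP : S < P) :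
    ∃ c : ℝ, 1 < c ∧ c ^ 2 * S ≤ P := by
  rcases hS.eq_or_lt with rfl | hS
  · exact ⟨2, one_lt_two, by linarith⟩
  · have hPS : 1 < P / S := (one_lt_div hS).mpr hSP
    refine ⟨Real.sqrt (P / S), Real.lt_sqrt_of_sq_lt (by simpa using hPS), ?_⟩
    rw [Real.sq_sqrt (by positivity), div_mul_cancel₀ P hS.ne']

theorem stmt0_general (Nt Nr Ns M : ℕ)
    (h : Fin Nr → Fin Nt → ℂ)
    (s : Fin Nr → Fin Ns → ℂ)
    (γ : Fin Nr → Fin Ns → ℝ)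
    (σ : ℝ)
    (P : ℝ)
    (x : Fin Ns → Fin Nt → ℂ) (tstar : ℝ) (htstar : 0 < tstar)
    (hfeas : ∀ i, CI Nt Nr M h (fun k => s k i) (fun k => γ k i) σ (x i) tstar)
    (hpow : ∑ i, ∑ j, ‖x i j‖ ^ 2 ≤ P)
    (hopt : ∀ (y : Fin Ns → Fin Nt → ℂ) (t : ℝ),
      (∀ i, CI Nt Nr M h (fun k => s k i) (fun k => γ k i) σ (y i) t) →
      (∑ i, ∑ j, ‖y i j‖ ^ 2 ≤ P) → t ≤ tstar) :
    ∑ i, ∑ j, ‖x i j‖ ^ 2 = P := by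
  refine hpow.eq_of_not_lt fun hslack => ?_
  have hS : 0 ≤ ∑ i, ∑ j, ‖x i j‖ ^ 2 := by positivity
  obtain ⟨c, hc1, hcP⟩ := exists_one_lt_sq_mul_le hS hslack
  have hscaled : c * tstar ≤ tstar :=
    hopt (c • x) (c * tstar) (fun i => (hfeas i).smul (by linarith))
      (by rwa [Finset.sum_sum_norm_smul_sq])
  nlinarith

/-- If `(x, t*)` is optimal for the block-level SB slot-variant problem and `t* > 0`,
then the block-level power constraint is active: `∑ᵢ ‖xᵢ‖² = P`. -/
theorem stmt0 (Nt Nr Ns M : ℕ) (hNt : 0 < Nt) (hNr : 0 < Nr) (hNs : 0 < Ns)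
    (hM : 3 ≤ M)
    (h : Fin Nr → Fin Nt → ℂ)
    (s : Fin Nr → Fin Ns → ℂ) (hs : ∀ k i, s k i ≠ 0)
    (γ : Fin Nr → Fin Ns → ℝ) (hγ : ∀ k i, 0 ≤ γ k i)
    (σ : ℝ) (hσ : 0 < σ)
    (P : ℝ) (hP : 0 < P)
    (x : Fin Ns → Fin Nt → ℂ) (tstar : ℝ) (htstar : 0 < tstar)
    (hfeas : ∀ i, CI Nt Nr M h (fun k => s k i) (fun k => γ k i) σ (x i) tstar)
    (hpow : ∑ i, ∑ j, ‖x i j‖ ^ 2 ≤ P)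
    (hopt : ∀ (y : Fin Ns → Fin Nt → ℂ) (t : ℝ),
      (∀ i, CI Nt Nr M h (fun k => s k i) (fun k => γ k i) σ (y i) t) →
      (∑ i, ∑ j, ‖y i j‖ ^ 2 ≤ P) → t ≤ tstar) :
    ∑ i, ∑ j, ‖x i j‖ ^ 2 = P :=
  stmt0_general Nt Nr Ns M h s γ σ P x tstar htstar hfeas hpow hopt
end

section
/- Fix a slot i and a power budget p > 0. Suppose (x*, t*) is an optimal solution of the SB-SLP problem in slot i (maximize t over pairs (x, t) with CI_i(x, t) and ‖x‖² ≤ p) and t* > 0. Then ‖x*‖² = p, and x*/t* is an optimal solution of the PM-SLP problem in slot i (minimize ‖x‖² over {x ∈ ℂ^{N_t} : CI_i(x, 1)}) with optimal value ‖x*/t*‖² = p/(t*)². -/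
/-! `CI` is positively homogeneous in `(x, t)` while the power `∑ ‖x j‖²` scales quadratically,
so any `y` with `CI y 1` can be rescaled until its power reaches `p`. Since no SB-SLP point beats
`t*`, this forces `t*² ‖y‖² ≥ p`; applied to `y = x*/t*` it gives `‖x*‖² = p`, and for general `y`
it is the PM-SLP optimality of `x*/t*`. -/

open scoped BigOperators

theorem sum_norm_sq_smul {ι : Type*} [Fintype ι] (c : ℝ) (x : ι → ℂ) :
    ∑ j, ‖(c • x) j‖ ^ 2 = c ^ 2 * ∑ j, ‖x j‖ ^ 2 := by
  simp only [Finset.mul_sum, Pi.smul_apply, norm_smul, mul_pow, Real.norm_eq_abs, sq_abs]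

theorem exists_lt_and_sq_mul_le {a T p : ℝ} (ha : 0 ≤ a) (hT : 0 ≤ T) (h : a ^ 2 * T < p) :
    ∃ c, a < c ∧ c ^ 2 * T ≤ p := by
  rcases hT.eq_or_lt with rfl | hT
  · exact ⟨a + 1, by linarith, by simpa using h.le⟩
  · refine ⟨Real.sqrt (p / T), ?_, ?_⟩
    · exact (Real.lt_sqrt ha).2 ((lt_div_iff₀ hT).2 h)
    · have hp : 0 ≤ p / T := div_nonneg (by nlinarith [sq_nonneg a]) hT.le
      rw [Real.sq_sqrt hp, div_mul_cancel₀ _ hT.ne']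

namespace CI

variable {Nt Nr M : ℕ} {h : Fin Nr → Fin Nt → ℂ} {s : Fin Nr → ℂ} {γ : Fin Nr → ℝ} {σ : ℝ}

theorem smul_s4 {x : Fin Nt → ℂ} {t c : ℝ} (hc : 0 ≤ c) (hx : CI Nt Nr M h s γ σ x t) :
    CI Nt Nr M h s γ σ (c • x) (c * t) := by
  intro k
  have hdiv : (∑ j, h k j * (c • x) j) / s k = c * ((∑ j, h k j * x j) / s k) := by
    simp only [Pi.smul_apply, Complex.real_smul, mul_left_comm _ (c : ℂ), ← Finset.mul_sum,
      mul_div_assoc]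
  rw [hdiv, Complex.re_ofReal_mul, Complex.im_ofReal_mul, abs_mul, abs_of_nonneg hc]
  have := mul_le_mul_of_nonneg_left (hx k) hc
  linarith [mul_div_assoc c |((∑ j, h k j * x j) / s k).im| (Real.tan (Real.pi / M))]

theorem le_sq_mul_sum_norm_sq_of_forall_le {p tstar : ℝ} (htstar : 0 ≤ tstar)
    (hopt : ∀ (x : Fin Nt → ℂ) (t : ℝ), CI Nt Nr M h s γ σ x t →
      (∑ j, ‖x j‖ ^ 2 ≤ p) → t ≤ tstar)
    {y : Fin Nt → ℂ} (hy : CI Nt Nr M h s γ σ y 1) :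
    p ≤ tstar ^ 2 * ∑ j, ‖y j‖ ^ 2 := by
  by_contra! hlt
  obtain ⟨c, htc, hcp⟩ :=
    exists_lt_and_sq_mul_le htstar (Finset.sum_nonneg fun j _ => sq_nonneg ‖y j‖) hlt
  have hc : 0 ≤ c := htstar.trans htc.le
  have hle := hopt (c • y) (c * 1) (hy.smul_s4 hc) (by rwa [sum_norm_sq_smul])
  linarith

end CI

theorem stmt4_general (Nt Nr Ns M : ℕ)
    (h : Fin Nr → Fin Nt → ℂ)
    (s : Fin Nr → Fin Ns → ℂ)
    (γ : Fin Nr → Fin Ns → ℝ)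
    (σ : ℝ)
    (i : Fin Ns) (p : ℝ)
    (xstar : Fin Nt → ℂ) (tstar : ℝ) (htstar : 0 < tstar)
    (hfeas : CI Nt Nr M h (fun k => s k i) (fun k => γ k i) σ xstar tstar)
    (hpow : ∑ j, ‖xstar j‖ ^ 2 ≤ p)
    (hopt : ∀ (x : Fin Nt → ℂ) (t : ℝ),
      CI Nt Nr M h (fun k => s k i) (fun k => γ k i) σ x t →
      (∑ j, ‖x j‖ ^ 2 ≤ p) → t ≤ tstar) :
    (∑ j, ‖xstar j‖ ^ 2 = p) ∧
    CI Nt Nr M h (fun k => s k i) (fun k => γ k i) σ ((1 / tstar) • xstar) 1 ∧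
    (∀ y : Fin Nt → ℂ,
      CI Nt Nr M h (fun k => s k i) (fun k => γ k i) σ y 1 →
      ∑ j, ‖((1 / tstar) • xstar) j‖ ^ 2 ≤ ∑ j, ‖y j‖ ^ 2) ∧
    (∑ j, ‖((1 / tstar) • xstar) j‖ ^ 2 = p / tstar ^ 2) := by
  have hscaled : CI Nt Nr M h (fun k => s k i) (fun k => γ k i) σ ((1 / tstar) • xstar) 1 := by
    simpa [htstar.ne'] using hfeas.smul_s4 (one_div_nonneg.2 htstar.le)
  have hbound : ∀ y, CI Nt Nr M h (fun k => s k i) (fun k => γ k i) σ y 1 →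
      p ≤ tstar ^ 2 * ∑ j, ‖y j‖ ^ 2 :=
    fun _ hy => CI.le_sq_mul_sum_norm_sq_of_forall_le htstar.le hopt hy
  have hnorm : ∑ j, ‖((1 / tstar) • xstar) j‖ ^ 2 = (∑ j, ‖xstar j‖ ^ 2) / tstar ^ 2 := by
    rw [sum_norm_sq_smul]; ring
  have hactive : ∑ j, ‖xstar j‖ ^ 2 = p := by
    have := hbound _ hscaled
    rw [hnorm, mul_div_cancel₀ _ (pow_ne_zero 2 htstar.ne')] at this
    exact hpow.antisymm this
  refine ⟨hactive, hscaled, fun y hy => ?_, by rw [hnorm, hactive]⟩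
  rw [hnorm, hactive, div_le_iff₀' (pow_pos htstar 2)]
  exact hbound y hy

/-- SB-SLP optimum `(x*, t*)` with `t* > 0` has active power constraint `‖x*‖² = p`,
and `x*/t*` is a PM-SLP optimum with value `p/(t*)²`. -/
theorem stmt4 (Nt Nr Ns M : ℕ) (hNt : 0 < Nt) (hNr : 0 < Nr) (hNs : 0 < Ns)
    (hM : 3 ≤ M)
    (h : Fin Nr → Fin Nt → ℂ)
    (s : Fin Nr → Fin Ns → ℂ) (hs : ∀ k i, s k i ≠ 0)
    (γ : Fin Nr → Fin Ns → ℝ) (hγ : ∀ k i, 0 ≤ γ k i)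
    (σ : ℝ) (hσ : 0 < σ)
    (i : Fin Ns) (p : ℝ) (hp : 0 < p)
    (xstar : Fin Nt → ℂ) (tstar : ℝ) (htstar : 0 < tstar)
    (hfeas : CI Nt Nr M h (fun k => s k i) (fun k => γ k i) σ xstar tstar)
    (hpow : ∑ j, ‖xstar j‖ ^ 2 ≤ p)
    (hopt : ∀ (x : Fin Nt → ℂ) (t : ℝ),
      CI Nt Nr M h (fun k => s k i) (fun k => γ k i) σ x t →
      (∑ j, ‖x j‖ ^ 2 ≤ p) → t ≤ tstar) :
    (∑ j, ‖xstar j‖ ^ 2 = p) ∧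
    CI Nt Nr M h (fun k => s k i) (fun k => γ k i) σ ((1 / tstar) • xstar) 1 ∧
    (∀ y : Fin Nt → ℂ,
      CI Nt Nr M h (fun k => s k i) (fun k => γ k i) σ y 1 →
      ∑ j, ‖((1 / tstar) • xstar) j‖ ^ 2 ≤ ∑ j, ‖y j‖ ^ 2) ∧
    (∑ j, ‖((1 / tstar) • xstar) j‖ ^ 2 = p / tstar ^ 2) :=
  stmt4_general Nt Nr Ns M h s γ σ i p xstar tstar htstar hfeas hpow hopt
end

section
/- Let P > 0. Suppose (x_1^{SB},…,x_{N_s}^{SB}, t*) is an optimal solution of the block-level SB slot-variant problem (maximize t subject to CI_i(x_i, t) for all i and ∑_{i=1}^{N_s} ‖x_i‖² ≤ P) and t* > 0. Then ∑_{i=1}^{N_s} ‖x_i^{SB}‖² = P, and the tuple (x_1^{SB}/t*, …, x_{N_s}^{SB}/t*) is an optimal solution of the block-level PM slot-variant problem (minimize ∑_i ‖x_i‖² subject to CI_i(x_i, 1) for all i), with optimal value ∑_i ‖x_i^{SB}/t*‖² = P/(t*)². -/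
open scoped BigOperators

/-!
The CI constraints are positively homogeneous, `CI(x, t) → CI(c • x, c * t)` for `c > 0`,
while the power scales by `c ^ 2`. Hence any power slack at an SB optimum could be spent on a
larger margin, so the power constraint is active; and a PM-feasible `y` using less power than
`P / t* ^ 2` would make `t* • y` an SB-feasible point with slack, again contradicting optimality.
-/

open Filter Topology

lemma exists_one_lt_sq_mul_lt {a b : ℝ} (hab : a < b) : ∃ r > 1, r ^ 2 * a < b := by
  have hlim : Tendsto (fun r : ℝ => r ^ 2 * a) (𝓝[>] 1) (𝓝 a) := by
    have hcont : Continuous fun r : ℝ => r ^ 2 * a := by fun_prop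
    exact (hcont.tendsto' 1 a (by simp)).mono_left nhdsWithin_le_nhds
  obtain ⟨r, hr, hr1⟩ := ((hlim.eventually (gt_mem_nhds hab)).and self_mem_nhdsWithin).exists
  exact ⟨r, hr1, hr⟩

lemma sum_norm_smul_sq {ι κ E : Type*} [Fintype ι] [Fintype κ] [SeminormedAddCommGroup E]
    [NormedSpace ℝ E] (c : ℝ) (y : ι → κ → E) :
    ∑ i, ∑ j, ‖(c • y i) j‖ ^ 2 = c ^ 2 * ∑ i, ∑ j, ‖y i j‖ ^ 2 := by
  simp only [Finset.mul_sum, Pi.smul_apply, norm_smul, mul_pow, Real.norm_eq_abs, sq_abs]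

section CI

variable {Nt Nr M : ℕ} {h : Fin Nr → Fin Nt → ℂ} {σ : ℝ}

lemma CI_smul {s : Fin Nr → ℂ} {γ : Fin Nr → ℝ} {x : Fin Nt → ℂ} {t c : ℝ} (hc : 0 < c)
    (hx : CI Nt Nr M h s γ σ x t) : CI Nt Nr M h s γ σ (c • x) (c * t) := by
  intro k
  have hsum : (∑ j, h k j * (c • x) j) / s k = c * ((∑ j, h k j * x j) / s k) := by
    simp only [Pi.smul_apply, Complex.real_smul, mul_left_comm _ (c : ℂ), ← Finset.mul_sum,
      mul_div_assoc]
  rw [hsum, Complex.re_ofReal_mul, Complex.im_ofReal_mul, abs_mul, abs_of_pos hc]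
  have := mul_le_mul_of_nonneg_left (hx k) hc.le
  linarith [mul_div_assoc c |((∑ j, h k j * x j) / s k).im| (Real.tan (Real.pi / M))]

lemma exists_CI_gt_of_power_lt {ι : Type*} [Fintype ι] {s : Fin Nr → ι → ℂ}
    {γ : Fin Nr → ι → ℝ} {x : ι → Fin Nt → ℂ} {t P : ℝ} (ht : 0 < t)
    (hx : ∀ i, CI Nt Nr M h (fun k => s k i) (fun k => γ k i) σ (x i) t)
    (hpow : ∑ i, ∑ j, ‖x i j‖ ^ 2 < P) :
    ∃ (x' : ι → Fin Nt → ℂ) (t' : ℝ),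
      (∀ i, CI Nt Nr M h (fun k => s k i) (fun k => γ k i) σ (x' i) t') ∧
      ∑ i, ∑ j, ‖x' i j‖ ^ 2 ≤ P ∧ t < t' := by
  obtain ⟨r, hr1, hr⟩ := exists_one_lt_sq_mul_lt hpow
  refine ⟨fun i => r • x i, r * t, fun i => CI_smul (by linarith) (hx i), ?_, ?_⟩
  · exact (sum_norm_smul_sq r x).trans_le hr.le
  · nlinarith

end CI

theorem stmt6_general (Nt Nr Ns M : ℕ)
    (h : Fin Nr → Fin Nt → ℂ)
    (s : Fin Nr → Fin Ns → ℂ)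
    (γ : Fin Nr → Fin Ns → ℝ)
    (σ : ℝ)
    (P : ℝ)
    (xSB : Fin Ns → Fin Nt → ℂ) (tstar : ℝ) (htstar : 0 < tstar)
    (hfeas : ∀ i, CI Nt Nr M h (fun k => s k i) (fun k => γ k i) σ (xSB i) tstar)
    (hpow : ∑ i, ∑ j, ‖xSB i j‖ ^ 2 ≤ P)
    (hopt : ∀ (x : Fin Ns → Fin Nt → ℂ) (t : ℝ),
      (∀ i, CI Nt Nr M h (fun k => s k i) (fun k => γ k i) σ (x i) t) →
      (∑ i, ∑ j, ‖x i j‖ ^ 2 ≤ P) → t ≤ tstar) :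
    (∑ i, ∑ j, ‖xSB i j‖ ^ 2 = P) ∧
    (∀ i, CI Nt Nr M h (fun k => s k i) (fun k => γ k i) σ
        ((1 / tstar) • xSB i) 1) ∧
    (∀ y : Fin Ns → Fin Nt → ℂ,
      (∀ i, CI Nt Nr M h (fun k => s k i) (fun k => γ k i) σ (y i) 1) →
      ∑ i, ∑ j, ‖((1 / tstar) • xSB i) j‖ ^ 2 ≤ ∑ i, ∑ j, ‖y i j‖ ^ 2) ∧
    (∑ i, ∑ j, ‖((1 / tstar) • xSB i) j‖ ^ 2 = P / tstar ^ 2) := by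
  have hactive : ∑ i, ∑ j, ‖xSB i j‖ ^ 2 = P := by
    refine hpow.antisymm (not_lt.1 fun hlt => ?_)
    obtain ⟨x, t, hx, hxP, hlt'⟩ := exists_CI_gt_of_power_lt htstar hfeas hlt
    exact hlt'.not_ge (hopt x t hx hxP)
  have hvalue : ∑ i, ∑ j, ‖((1 / tstar) • xSB i) j‖ ^ 2 = P / tstar ^ 2 := by
    rw [sum_norm_smul_sq, hactive]
    field_simp
  refine ⟨hactive, fun i => ?_, fun y hy => ?_, hvalue⟩
  · simpa [htstar.ne'] using CI_smul (one_div_pos.2 htstar) (hfeas i)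
  · rw [hvalue]
    refine not_lt.1 fun hlt => ?_
    have hy' : ∀ i, CI Nt Nr M h (fun k => s k i) (fun k => γ k i) σ (tstar • y i) tstar :=
      fun i => by simpa using CI_smul htstar (hy i)
    have hpow' : ∑ i, ∑ j, ‖(tstar • y i) j‖ ^ 2 < P := by
      rw [sum_norm_smul_sq]
      rwa [lt_div_iff₀' (by positivity)] at hlt
    obtain ⟨x, t, hx, hxP, hlt'⟩ := exists_CI_gt_of_power_lt htstar hy' hpow'
    exact hlt'.not_ge (hopt x t hx hxP)

/-- A block-level SB slot-variant optimum `(x^{SB}, t*)` with `t* > 0` has active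
power constraint, and `x^{SB}/t*` is a block-level PM slot-variant optimum with
value `P/(t*)²`. -/
theorem stmt6 (Nt Nr Ns M : ℕ) (hNt : 0 < Nt) (hNr : 0 < Nr) (hNs : 0 < Ns)
    (hM : 3 ≤ M)
    (h : Fin Nr → Fin Nt → ℂ)
    (s : Fin Nr → Fin Ns → ℂ) (hs : ∀ k i, s k i ≠ 0)
    (γ : Fin Nr → Fin Ns → ℝ) (hγ : ∀ k i, 0 ≤ γ k i)
    (σ : ℝ) (hσ : 0 < σ)
    (P : ℝ) (hP : 0 < P)
    (xSB : Fin Ns → Fin Nt → ℂ) (tstar : ℝ) (htstar : 0 < tstar)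
    (hfeas : ∀ i, CI Nt Nr M h (fun k => s k i) (fun k => γ k i) σ (xSB i) tstar)
    (hpow : ∑ i, ∑ j, ‖xSB i j‖ ^ 2 ≤ P)
    (hopt : ∀ (x : Fin Ns → Fin Nt → ℂ) (t : ℝ),
      (∀ i, CI Nt Nr M h (fun k => s k i) (fun k => γ k i) σ (x i) t) →
      (∑ i, ∑ j, ‖x i j‖ ^ 2 ≤ P) → t ≤ tstar) :
    (∑ i, ∑ j, ‖xSB i j‖ ^ 2 = P) ∧
    (∀ i, CI Nt Nr M h (fun k => s k i) (fun k => γ k i) σ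
        ((1 / tstar) • xSB i) 1) ∧
    (∀ y : Fin Ns → Fin Nt → ℂ,
      (∀ i, CI Nt Nr M h (fun k => s k i) (fun k => γ k i) σ (y i) 1) →
      ∑ i, ∑ j, ‖((1 / tstar) • xSB i) j‖ ^ 2 ≤ ∑ i, ∑ j, ‖y i j‖ ^ 2) ∧
    (∑ i, ∑ j, ‖((1 / tstar) • xSB i) j‖ ^ 2 = P / tstar ^ 2) :=
  stmt6_general Nt Nr Ns M h s γ σ P xSB tstar htstar hfeas hpow hopt
end

section
/- Write s_{:,i} = (s_{1,i},…,s_{N_r,i}) ∈ ℂ^{N_r} and suppose the vectors s_{:,1},…,s_{:,N_s} are linearly independent over ℂ (so in particular N_s ≤ N_r). Then the set of achievable objective values of the block-level PM slot-invariant problem equals that of the block-level PM slot-variant problem: { ∑_{i=1}^{N_s} ‖W s_{:,i}‖² : W ∈ ℂ^{N_t×N_r}, CI_i(W s_{:,i}, 1) for all i } = { ∑_{i=1}^{N_s} ‖x_i‖² : x_i ∈ ℂ^{N_t}, CI_i(x_i, 1) for all i }. In particular the two problems have the same optimal value. -/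
open scoped BigOperators

namespace Matrix

theorem mulVec_surjective_of_linearIndependent {K m n ι : Type*} [Field K]
    [Fintype m] [DecidableEq m] [Fintype ι] {v : ι → m → K} (hv : LinearIndependent K v) :
    Function.Surjective fun W : Matrix n m K => fun i => W *ᵥ v i := by
  classical
  intro x
  -- `W` is `c ↦ ∑ cᵢ xᵢ` composed with a left inverse of `c ↦ ∑ cᵢ vᵢ`.
  obtain ⟨g, hg⟩ := (Fintype.linearCombination K v).exists_leftInverse_of_injective
    (LinearMap.ker_eq_bot.mpr hv.fintypeLinearCombination_injective)
  refine ⟨LinearMap.toMatrix' (Fintype.linearCombination K x ∘ₗ g), funext fun i => ?_⟩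
  show _ *ᵥ v i = x i
  have hgv : g (v i) = Pi.single i 1 := by
    simpa using LinearMap.congr_fun hg (Pi.single i 1)
  rw [← toLin'_apply, toLin'_toMatrix', LinearMap.comp_apply, hgv,
    Fintype.linearCombination_apply_single, one_smul]

end Matrix

theorem stmt16_general (Nt Nr Ns M : ℕ)
    (h : Fin Nr → Fin Nt → ℂ)
    (s : Fin Nr → Fin Ns → ℂ) (γ : Fin Nr → Fin Ns → ℝ) (σ : ℝ)
    (hLI : LinearIndependent ℂ (fun i : Fin Ns => fun k : Fin Nr => s k i)) :
    {v : ℝ | ∃ W : Matrix (Fin Nt) (Fin Nr) ℂ,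
        (∀ i, CI Nt Nr M h (fun k => s k i) (fun k => γ k i) σ
          (W.mulVec fun k => s k i) 1) ∧
        v = ∑ i, ∑ j, ‖W.mulVec (fun k => s k i) j‖ ^ 2}
    = {v : ℝ | ∃ x : Fin Ns → Fin Nt → ℂ,
        (∀ i, CI Nt Nr M h (fun k => s k i) (fun k => γ k i) σ (x i) 1) ∧
        v = ∑ i, ∑ j, ‖x i j‖ ^ 2} ∧
    sInf {v : ℝ | ∃ W : Matrix (Fin Nt) (Fin Nr) ℂ,
        (∀ i, CI Nt Nr M h (fun k => s k i) (fun k => γ k i) σ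
          (W.mulVec fun k => s k i) 1) ∧
        v = ∑ i, ∑ j, ‖W.mulVec (fun k => s k i) j‖ ^ 2}
    = sInf {v : ℝ | ∃ x : Fin Ns → Fin Nt → ℂ,
        (∀ i, CI Nt Nr M h (fun k => s k i) (fun k => γ k i) σ (x i) 1) ∧
        v = ∑ i, ∑ j, ‖x i j‖ ^ 2} := by
  have hsurj := Matrix.mulVec_surjective_of_linearIndependent (n := Fin Nt) hLI
  refine (fun hsets => ⟨hsets, congrArg sInf hsets⟩) (Set.ext fun v => ?_)
  refine Iff.symm ?_
  exact hsurj.exists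

/-- If the data-symbol vectors `s_{:,1},…,s_{:,N_s}` are linearly independent over
`ℂ`, the sets of achievable objective values of the block-level PM slot-invariant
and slot-variant problems coincide; in particular the optimal values agree. -/
theorem stmt16 (Nt Nr Ns M : ℕ) (hNt : 0 < Nt) (hNr : 0 < Nr) (hNs : 0 < Ns)
    (hM : 3 ≤ M)
    (h : Fin Nr → Fin Nt → ℂ)
    (s : Fin Nr → Fin Ns → ℂ) (hs : ∀ k i, s k i ≠ 0)
    (γ : Fin Nr → Fin Ns → ℝ) (hγ : ∀ k i, 0 ≤ γ k i)
    (σ : ℝ) (hσ : 0 < σ)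
    (hLI : LinearIndependent ℂ (fun i : Fin Ns => fun k : Fin Nr => s k i)) :
    {v : ℝ | ∃ W : Matrix (Fin Nt) (Fin Nr) ℂ,
        (∀ i, CI Nt Nr M h (fun k => s k i) (fun k => γ k i) σ
          (W.mulVec fun k => s k i) 1) ∧
        v = ∑ i, ∑ j, ‖W.mulVec (fun k => s k i) j‖ ^ 2}
    = {v : ℝ | ∃ x : Fin Ns → Fin Nt → ℂ,
        (∀ i, CI Nt Nr M h (fun k => s k i) (fun k => γ k i) σ (x i) 1) ∧
        v = ∑ i, ∑ j, ‖x i j‖ ^ 2} ∧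
    sInf {v : ℝ | ∃ W : Matrix (Fin Nt) (Fin Nr) ℂ,
        (∀ i, CI Nt Nr M h (fun k => s k i) (fun k => γ k i) σ
          (W.mulVec fun k => s k i) 1) ∧
        v = ∑ i, ∑ j, ‖W.mulVec (fun k => s k i) j‖ ^ 2}
    = sInf {v : ℝ | ∃ x : Fin Ns → Fin Nt → ℂ,
        (∀ i, CI Nt Nr M h (fun k => s k i) (fun k => γ k i) σ (x i) 1) ∧
        v = ∑ i, ∑ j, ‖x i j‖ ^ 2} :=
  stmt16_general Nt Nr Ns M h s γ σ hLI
end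

section
/- Let N_t, N_r, N ∈ ℕ be positive. Let P_1 = [I; 0] and P_2 = [0; I] in ℝ^{2N_t×N_t} (I the N_t×N_t identity) and P_3 = [[0, I],[−I, 0]] ∈ ℝ^{2N_r×2N_r} (I the N_r×N_r identity). For i = 1,…,N let G_i ∈ ℝ^{2N_r×2N_t}, s_i ∈ ℝ^{2N_r}, b_i ∈ ℝ^{2N_r}, λ_i ∈ ℝ^{2N_r}, and define Φ(W̄) := P_1 W̄ + P_2 W̄ P_3 for W̄ ∈ ℝ^{N_t×2N_r}. Suppose Σ := ∑_{i=1}^N ( s_i s_iᵀ + P_3 s_i s_iᵀ P_3ᵀ ) is positive definite. Then the function L(W̄) := ∑_{i=1}^N ‖Φ(W̄) s_i‖² + ∑_{i=1}^N λ_iᵀ ( b_i − G_i Φ(W̄) s_i ) has a unique global minimizer over ℝ^{N_t×2N_r}, given by W̄* = (1/2) · ( ∑_{i=1}^N P_1ᵀ G_iᵀ λ_i s_iᵀ + P_2ᵀ G_iᵀ λ_i s_iᵀ P_3ᵀ ) · Σ⁻¹. -/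
/-!
Row by row, `L` is a quadratic function of `W̄` with Hessian `2Σ`: since `P₁ y + P₂ z` just
stacks `y` over `z`, `‖Φ(W̄) sᵢ‖² = ‖W̄ sᵢ‖² + ‖W̄ P₃ sᵢ‖²`, and summing over `i` gives
`∑ₐ W̄ₐᵀ Σ W̄ₐ` over the rows `W̄ₐ`; the multiplier term is affine, `const − ⟨C, W̄⟩` with
`C = ∑ᵢ P₁ᵀGᵢᵀλᵢ sᵢᵀ + P₂ᵀGᵢᵀλᵢ (P₃ sᵢ)ᵀ`. Completing the square around `W̄* = ½ C Σ⁻¹` gives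
`L(W̄) − L(W̄*) = ∑ₐ (W̄ − W̄*)ₐᵀ Σ (W̄ − W̄*)ₐ`, which is positive unless `W̄ = W̄*`.
-/

open Matrix

def IsUniqueMinimizer {α β : Type*} [Preorder β] (f : α → β) (x : α) : Prop :=
  (∀ y, f x ≤ f y) ∧ ∀ y, (∀ y', f y ≤ f y') → y = x

section CompletingTheSquare

variable {m n R : Type*} [Fintype m] [Fintype n] [CommRing R] {S : Matrix n n R}

theorem Matrix.IsSymm.dotProduct_mulVec_comm (hS : S.IsSymm) (x y : n → R) :
    x ⬝ᵥ S *ᵥ y = y ⬝ᵥ S *ᵥ x := by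
  rw [dotProduct_mulVec, ← mulVec_transpose, hS.eq, dotProduct_comm]

theorem Matrix.IsSymm.dotProduct_mulVec_sub_dotProduct_eq (hS : S.IsSymm) {c x₀ : n → R}
    (hc : c = 2 • S *ᵥ x₀) (x : n → R) :
    x ⬝ᵥ S *ᵥ x - c ⬝ᵥ x = (x - x₀) ⬝ᵥ S *ᵥ (x - x₀) - x₀ ⬝ᵥ S *ᵥ x₀ := by
  have hcx : c ⬝ᵥ x = 2 * (x₀ ⬝ᵥ S *ᵥ x) := by
    rw [hc, smul_dotProduct, dotProduct_comm, hS.dotProduct_mulVec_comm, nsmul_eq_mul]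
    norm_num
  rw [hcx, mulVec_sub, dotProduct_sub, sub_dotProduct, sub_dotProduct,
    hS.dotProduct_mulVec_comm x x₀]
  ring

theorem Matrix.IsSymm.sum_dotProduct_mulVec_sub_dotProduct_eq (hS : S.IsSymm)
    {C W₀ : Matrix m n R} (hC : C = 2 • (W₀ * S)) (W : Matrix m n R) :
    ∑ a, (W a ⬝ᵥ S *ᵥ W a - C a ⬝ᵥ W a) =
      ∑ a, (W a - W₀ a) ⬝ᵥ S *ᵥ (W a - W₀ a) - ∑ a, W₀ a ⬝ᵥ S *ᵥ W₀ a := by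
  rw [← Finset.sum_sub_distrib]
  refine Finset.sum_congr rfl fun a _ => hS.dotProduct_mulVec_sub_dotProduct_eq ?_ (W a)
  rw [hC]
  show 2 • (W₀ * S) a = _
  rw [mul_apply_eq_vecMul, ← mulVec_transpose, hS.eq]

end CompletingTheSquare

section PositiveDefinite

variable {m n : Type*} [Fintype m] [Fintype n] {S : Matrix n n ℝ}

theorem Matrix.PosSemidef.sum_dotProduct_mulVec_nonneg (hS : S.PosSemidef) (W : Matrix m n ℝ) :
    0 ≤ ∑ a, W a ⬝ᵥ S *ᵥ W a :=
  Finset.sum_nonneg fun a _ => by simpa using hS.dotProduct_mulVec_nonneg (W a)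

theorem Matrix.PosDef.eq_zero_of_sum_dotProduct_mulVec_nonpos (hS : S.PosDef)
    {W : Matrix m n ℝ} (hW : ∑ a, W a ⬝ᵥ S *ᵥ W a ≤ 0) : W = 0 := by
  by_contra hne
  obtain ⟨a, ha⟩ : ∃ a, W a ≠ 0 := by
    by_contra! h
    exact hne (funext h)
  have hpos : 0 < ∑ a, W a ⬝ᵥ S *ᵥ W a :=
    Finset.sum_pos' (fun b _ => by simpa using hS.posSemidef.dotProduct_mulVec_nonneg (W b))
      ⟨a, Finset.mem_univ a, by simpa using hS.dotProduct_mulVec_pos ha⟩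
  linarith

theorem Matrix.PosDef.isUniqueMinimizer_of_eq_sum_dotProduct_mulVec_sub [DecidableEq n]
    (hS : S.PosDef) {f : Matrix m n ℝ → ℝ} {C : Matrix m n ℝ} {κ : ℝ}
    (hf : ∀ W, f W = ∑ a, (W a ⬝ᵥ S *ᵥ W a - C a ⬝ᵥ W a) + κ) :
    IsUniqueMinimizer f ((1 / 2 : ℝ) • (C * S⁻¹)) := by
  set W₀ := (1 / 2 : ℝ) • (C * S⁻¹)
  have hC : C = 2 • (W₀ * S) := by
    rw [smul_mul, nonsing_inv_mul_cancel_right S C ((isUnit_iff_isUnit_det S).mp hS.isUnit),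
      ← Nat.cast_smul_eq_nsmul ℝ, smul_smul]
    norm_num
  have hSymm : S.IsSymm := isHermitian_iff_isSymm.mp hS.isHermitian
  have hgap : ∀ V, f V - f W₀ = ∑ a, (V a - W₀ a) ⬝ᵥ S *ᵥ (V a - W₀ a) := by
    intro V
    rw [hf, hf, hSymm.sum_dotProduct_mulVec_sub_dotProduct_eq hC,
      hSymm.sum_dotProduct_mulVec_sub_dotProduct_eq hC]
    simp only [sub_self, zero_dotProduct, Finset.sum_const_zero]
    ring
  refine ⟨fun V => sub_nonneg.mp ((hgap V).symm ▸ hS.posSemidef.sum_dotProduct_mulVec_nonneg _),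
    fun V hV => sub_eq_zero.mp (hS.eq_zero_of_sum_dotProduct_mulVec_nonpos ?_)⟩
  exact (hgap V).symm.trans_le (sub_nonpos.mpr (hV W₀))

end PositiveDefinite

section SumsOfOuterProducts

variable {ι m n R : Type*} [Fintype ι] [Fintype m] [Fintype n] [CommRing R]

theorem fromRows_one_zero_mulVec_add_fromRows_zero_one_mulVec [DecidableEq n] (y z : n → R) :
    fromRows (1 : Matrix n n R) 0 *ᵥ y + fromRows 0 (1 : Matrix n n R) *ᵥ z = Sum.elim y z := by
  ext (a | a) <;> simp [fromRows_mulVec]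

theorem dotProduct_mulVec_mulVec_add_mulVec {k : Type*} [Fintype k] (l : m → R)
    (G : Matrix m n R) (P Q : Matrix n k R) (y z : k → R) :
    l ⬝ᵥ G *ᵥ (P *ᵥ y + Q *ᵥ z) = (Pᵀ * Gᵀ) *ᵥ l ⬝ᵥ y + (Qᵀ * Gᵀ) *ᵥ l ⬝ᵥ z := by
  simp only [mulVec_add, dotProduct_add, mulVec_mulVec, dotProduct_mulVec, ← mulVec_transpose,
    transpose_mul]

theorem sum_sq_dotProduct_eq_dotProduct_mulVec (s : ι → n → R) (x : n → R) :
    ∑ i, (s i ⬝ᵥ x) ^ 2 = x ⬝ᵥ (∑ i, vecMulVec (s i) (s i)) *ᵥ x := by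
  simp [sum_mulVec, sum_dotProduct, smul_dotProduct, vecMulVec_mulVec, sq, dotProduct_comm x]

theorem sum_sum_mulVec_sq_eq_sum_dotProduct_mulVec (W : Matrix m n R) (s : ι → n → R) :
    ∑ i, ∑ a, (W *ᵥ s i) a ^ 2 = ∑ a, W a ⬝ᵥ (∑ i, vecMulVec (s i) (s i)) *ᵥ W a := by
  rw [Finset.sum_comm]
  refine Finset.sum_congr rfl fun a _ => ?_
  rw [← sum_sq_dotProduct_eq_dotProduct_mulVec]
  simp [mulVec, dotProduct_comm]

theorem sum_dotProduct_mulVec_eq_sum_dotProduct (W : Matrix m n R) (u : ι → m → R)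
    (s : ι → n → R) :
    ∑ i, u i ⬝ᵥ W *ᵥ s i = ∑ a, (∑ i, vecMulVec (u i) (s i)) a ⬝ᵥ W a := by
  simp only [dotProduct, mulVec, Matrix.sum_apply, vecMulVec_apply, Finset.mul_sum,
    Finset.sum_mul]
  rw [Finset.sum_comm]
  refine Finset.sum_congr rfl fun a _ => ?_
  rw [Finset.sum_comm]
  exact Finset.sum_congr rfl fun i _ => Finset.sum_congr rfl fun j _ => by ring

end SumsOfOuterProducts

theorem stmt18_general (Nt Nr N : ℕ)
    (P1 P2 : Matrix (Fin Nt ⊕ Fin Nt) (Fin Nt) ℝ)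
    (hP1 : ∀ p j, P1 p j =
      Sum.elim (fun a => if a = j then (1 : ℝ) else 0) (fun _ => (0 : ℝ)) p)
    (hP2 : ∀ p j, P2 p j =
      Sum.elim (fun _ => (0 : ℝ)) (fun a => if a = j then (1 : ℝ) else 0) p)
    (P3 : Matrix (Fin Nr ⊕ Fin Nr) (Fin Nr ⊕ Fin Nr) ℝ)
    (G : Fin N → Matrix (Fin Nr ⊕ Fin Nr) (Fin Nt ⊕ Fin Nt) ℝ)
    (s b lam : Fin N → (Fin Nr ⊕ Fin Nr) → ℝ)
    (Phi : Matrix (Fin Nt) (Fin Nr ⊕ Fin Nr) ℝ →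
      Matrix (Fin Nt ⊕ Fin Nt) (Fin Nr ⊕ Fin Nr) ℝ)
    (hPhi : ∀ W, Phi W = P1 * W + P2 * W * P3)
    (Sig : Matrix (Fin Nr ⊕ Fin Nr) (Fin Nr ⊕ Fin Nr) ℝ)
    (hSig : Sig = ∑ i, (Matrix.vecMulVec (s i) (s i) +
        Matrix.vecMulVec (P3.mulVec (s i)) (P3.mulVec (s i))))
    (hposdef : Sig.PosDef)
    (L : Matrix (Fin Nt) (Fin Nr ⊕ Fin Nr) ℝ → ℝ)
    (hL : ∀ W, L W =
      (∑ i, ∑ p, ((Phi W).mulVec (s i) p) ^ 2) +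
      ∑ i, ∑ k, lam i k * (b i k - (G i).mulVec ((Phi W).mulVec (s i)) k))
    (Wstar : Matrix (Fin Nt) (Fin Nr ⊕ Fin Nr) ℝ)
    (hWstar : Wstar = (1 / 2 : ℝ) •
      ((∑ i,
        (Matrix.vecMulVec ((P1.transpose * (G i).transpose).mulVec (lam i)) (s i) +
         Matrix.vecMulVec ((P2.transpose * (G i).transpose).mulVec (lam i))
           (P3.mulVec (s i)))) * Sig⁻¹)) :
    (∀ V, L Wstar ≤ L V) ∧
    (∀ V, (∀ V', L V ≤ L V') → V = Wstar) := by
  set C : Matrix (Fin Nt) (Fin Nr ⊕ Fin Nr) ℝ := ∑ i,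
    (vecMulVec ((P1ᵀ * (G i)ᵀ) *ᵥ lam i) (s i) + vecMulVec ((P2ᵀ * (G i)ᵀ) *ᵥ lam i) (P3 *ᵥ s i))
    with hC
  have hP1' : P1 = fromRows 1 0 := by ext (a | a) j <;> simp [hP1, one_apply]
  have hP2' : P2 = fromRows 0 1 := by ext (a | a) j <;> simp [hP2, one_apply]
  have hPhi_mulVec : ∀ W x, Phi W *ᵥ x = P1 *ᵥ (W *ᵥ x) + P2 *ᵥ (W *ᵥ (P3 *ᵥ x)) := by
    intro W x
    rw [hPhi, add_mulVec, mulVec_mulVec, mulVec_mulVec, mulVec_mulVec, Matrix.mul_assoc]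
  have hquad : ∀ W, ∑ i, ∑ p, (Phi W *ᵥ s i) p ^ 2 = ∑ a, W a ⬝ᵥ Sig *ᵥ W a := by
    intro W
    simp only [hPhi_mulVec, hP1', hP2', fromRows_one_zero_mulVec_add_fromRows_zero_one_mulVec,
      Fintype.sum_sum_type, Sum.elim_inl, Sum.elim_inr, Finset.sum_add_distrib,
      sum_sum_mulVec_sq_eq_sum_dotProduct_mulVec, hSig, add_mulVec, dotProduct_add]
  have hlin : ∀ W, ∑ i, ∑ k, lam i k * (b i k - (G i *ᵥ (Phi W *ᵥ s i)) k) =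
      ∑ i, lam i ⬝ᵥ b i - ∑ a, C a ⬝ᵥ W a := by
    intro W
    change ∑ i, lam i ⬝ᵥ (b i - G i *ᵥ (Phi W *ᵥ s i)) = _
    simp only [dotProduct_sub, hPhi_mulVec, dotProduct_mulVec_mulVec_add_mulVec,
      Finset.sum_sub_distrib, Finset.sum_add_distrib, sum_dotProduct_mulVec_eq_sum_dotProduct, hC]
    rw [← Finset.sum_add_distrib]
    exact congrArg _ (Finset.sum_congr rfl fun a _ => (add_dotProduct _ _ _).symm)
  have hL_rows : ∀ W, L W = ∑ a, (W a ⬝ᵥ Sig *ᵥ W a - C a ⬝ᵥ W a) + ∑ i, lam i ⬝ᵥ b i := by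
    intro W
    rw [hL, hquad, hlin, Finset.sum_sub_distrib]
    ring
  exact hWstar ▸ hposdef.isUniqueMinimizer_of_eq_sum_dotProduct_mulVec_sub hL_rows

/-- Unique minimizer of the Lagrangian of the block-level PM slot-invariant
problem: with `Φ(W̄) = P₁ W̄ + P₂ W̄ P₃` and `Σ = ∑ᵢ (sᵢ sᵢᵀ + P₃ sᵢ sᵢᵀ P₃ᵀ)`
positive definite, the function
`L(W̄) = ∑ᵢ ‖Φ(W̄) sᵢ‖² + ∑ᵢ λᵢᵀ(bᵢ − Gᵢ Φ(W̄) sᵢ)` has the unique global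
minimizer `W̄* = (1/2)(∑ᵢ P₁ᵀGᵢᵀλᵢ sᵢᵀ + P₂ᵀGᵢᵀλᵢ (P₃ sᵢ)ᵀ) Σ⁻¹`. -/
theorem stmt18 (Nt Nr N : ℕ) (hNt : 0 < Nt) (hNr : 0 < Nr) (hN : 0 < N)
    (P1 P2 : Matrix (Fin Nt ⊕ Fin Nt) (Fin Nt) ℝ)
    (hP1 : ∀ p j, P1 p j =
      Sum.elim (fun a => if a = j then (1 : ℝ) else 0) (fun _ => (0 : ℝ)) p)
    (hP2 : ∀ p j, P2 p j =
      Sum.elim (fun _ => (0 : ℝ)) (fun a => if a = j then (1 : ℝ) else 0) p)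
    (P3 : Matrix (Fin Nr ⊕ Fin Nr) (Fin Nr ⊕ Fin Nr) ℝ)
    (hP3 : P3 = Matrix.fromBlocks 0 1 (-1) 0)
    (G : Fin N → Matrix (Fin Nr ⊕ Fin Nr) (Fin Nt ⊕ Fin Nt) ℝ)
    (s b lam : Fin N → (Fin Nr ⊕ Fin Nr) → ℝ)
    (Phi : Matrix (Fin Nt) (Fin Nr ⊕ Fin Nr) ℝ →
      Matrix (Fin Nt ⊕ Fin Nt) (Fin Nr ⊕ Fin Nr) ℝ)
    (hPhi : ∀ W, Phi W = P1 * W + P2 * W * P3)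
    (Sig : Matrix (Fin Nr ⊕ Fin Nr) (Fin Nr ⊕ Fin Nr) ℝ)
    (hSig : Sig = ∑ i, (Matrix.vecMulVec (s i) (s i) +
        Matrix.vecMulVec (P3.mulVec (s i)) (P3.mulVec (s i))))
    (hposdef : Sig.PosDef)
    (L : Matrix (Fin Nt) (Fin Nr ⊕ Fin Nr) ℝ → ℝ)
    (hL : ∀ W, L W =
      (∑ i, ∑ p, ((Phi W).mulVec (s i) p) ^ 2) +
      ∑ i, ∑ k, lam i k * (b i k - (G i).mulVec ((Phi W).mulVec (s i)) k))
    (Wstar : Matrix (Fin Nt) (Fin Nr ⊕ Fin Nr) ℝ)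
    (hWstar : Wstar = (1 / 2 : ℝ) •
      ((∑ i,
        (Matrix.vecMulVec ((P1.transpose * (G i).transpose).mulVec (lam i)) (s i) +
         Matrix.vecMulVec ((P2.transpose * (G i).transpose).mulVec (lam i))
           (P3.mulVec (s i)))) * Sig⁻¹)) :
    (∀ V, L Wstar ≤ L V) ∧
    (∀ V, (∀ V', L V ≤ L V') → V = Wstar) :=
  stmt18_general Nt Nr N P1 P2 hP1 hP2 P3 G s b lam Phi hPhi Sig hSig hposdef L hL Wstar hWstar
end

section
/- With P_1, P_2, P_3, G_i, s_i, b_i, λ_i, Φ and Σ as in the slot-invariant Lagrangian setup, and Σ positive definite, the minimum over W̄ ∈ ℝ^{N_t×2N_r} of the Lagrangian L(W̄) = ∑_{i=1}^N ‖Φ(W̄) s_i‖² + ∑_{i=1}^N λ_iᵀ ( b_i − G_i Φ(W̄) s_i ) equals −(1/4) λᵀ U λ + λᵀ b, where λ ∈ ℝ^{2N N_r} is the stacked vector (λ_1;…;λ_N), b is the stacked vector (b_1;…;b_N), and U is the N×N block matrix whose (i,j) block is U_{i,j} = (s_jᵀ Σ⁻¹ s_i) · G_i P_1 P_1ᵀ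 G_jᵀ + (s_jᵀ P_3ᵀ Σ⁻¹ s_i) · G_i P_1 P_2ᵀ G_jᵀ + (s_jᵀ Σ⁻¹ P_3 s_i) · G_i P_2 P_1ᵀ G_jᵀ + (s_jᵀ P_3ᵀ Σ⁻¹ P_3 s_i) · G_i P_2 P_2ᵀ G_jᵀ ∈ ℝ^{2N_r×2N_r}. -/
open scoped BigOperators
open Matrix

section helpers
variable {n m k : Type*} [Fintype n] [Fintype m] [Fintype k]

lemma my_sum_mulVec {ι : Type*} (t : Finset ι) (M : ι → Matrix n m ℝ) (v : m → ℝ) :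
    (∑ i ∈ t, M i) *ᵥ v = ∑ i ∈ t, (M i) *ᵥ v := by
  ext p
  rw [Finset.sum_apply p t]
  simp only [Matrix.mulVec, dotProduct, Matrix.sum_apply, Finset.sum_mul]
  rw [Finset.sum_comm]

lemma my_vecMulVec_mulVec (u v x : n → ℝ) :
    (Matrix.vecMulVec u v) *ᵥ x = (v ⬝ᵥ x) • u := by
  ext p
  simp only [Matrix.vecMulVec, Matrix.mulVec, dotProduct, Pi.smul_apply, smul_eq_mul,
    Matrix.of_apply, Finset.sum_mul, Finset.mul_sum]
  exact Finset.sum_congr rfl (by intros; ring)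

lemma my_sym_dot (M : Matrix n n ℝ) (hM : Mᵀ = M) (u v : n → ℝ) :
    u ⬝ᵥ M *ᵥ v = v ⬝ᵥ M *ᵥ u := by
  rw [Matrix.dotProduct_mulVec, ← Matrix.mulVec_transpose, hM, dotProduct_comm]

lemma my_dot_mul_transpose (A : Matrix n m ℝ) (B : Matrix k m ℝ) (u : n → ℝ) (v : k → ℝ) :
    u ⬝ᵥ (A * Bᵀ) *ᵥ v = (Aᵀ *ᵥ u) ⬝ᵥ (Bᵀ *ᵥ v) := by
  rw [← Matrix.mulVec_mulVec, Matrix.dotProduct_mulVec, ← Matrix.mulVec_transpose]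

lemma my_quad_key (M : Matrix n n ℝ) [DecidableEq n] (hM : M.PosDef) (a v : n → ℝ) :
    v ⬝ᵥ M *ᵥ v - v ⬝ᵥ a =
      (v - (1/2 : ℝ) • M⁻¹ *ᵥ a) ⬝ᵥ M *ᵥ (v - (1/2 : ℝ) • M⁻¹ *ᵥ a)
        - (1/4 : ℝ) * (a ⬝ᵥ M⁻¹ *ᵥ a) := by
  have hsym : Mᵀ = M := hM.isHermitian.eq
  have hMv0 : M *ᵥ ((1/2 : ℝ) • M⁻¹ *ᵥ a) = (1/2 : ℝ) • a := by
    rw [Matrix.mulVec_smul, Matrix.mulVec_mulVec, Matrix.mul_nonsing_inv _ (hM.det_pos.ne'.isUnit), Matrix.one_mulVec]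
  have h1 : ((1/2 : ℝ) • M⁻¹ *ᵥ a) ⬝ᵥ M *ᵥ v = v ⬝ᵥ ((1/2:ℝ) • a) := by
    rw [my_sym_dot M hsym, hMv0]
  rw [Matrix.mulVec_sub, sub_dotProduct, dotProduct_sub, dotProduct_sub,
    hMv0, h1]
  simp only [dotProduct_smul, smul_dotProduct, smul_eq_mul]
  rw [dotProduct_comm (M⁻¹ *ᵥ a) a]
  ring

lemma my_quad_lb (M : Matrix n n ℝ) [DecidableEq n] (hM : M.PosDef) (a v : n → ℝ) :
    -(1/4 : ℝ) * (a ⬝ᵥ M⁻¹ *ᵥ a) ≤ v ⬝ᵥ M *ᵥ v - v ⬝ᵥ a := by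
  rw [my_quad_key M hM a v]
  have := hM.posSemidef.dotProduct_mulVec_nonneg (v - (1/2 : ℝ) • M⁻¹ *ᵥ a)
  simp only [star_trivial] at this
  linarith

lemma my_quad_eq (M : Matrix n n ℝ) [DecidableEq n] (hM : M.PosDef) (a : n → ℝ) :
    ((1/2 : ℝ) • M⁻¹ *ᵥ a) ⬝ᵥ M *ᵥ ((1/2 : ℝ) • M⁻¹ *ᵥ a) - ((1/2 : ℝ) • M⁻¹ *ᵥ a) ⬝ᵥ a =
      -(1/4 : ℝ) * (a ⬝ᵥ M⁻¹ *ᵥ a) := by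
  rw [my_quad_key M hM a]
  simp


lemma my_mulVec_sum {ι : Type*} (t : Finset ι) (M : Matrix n m ℝ) (v : ι → m → ℝ) :
    M *ᵥ (∑ i ∈ t, v i) = ∑ i ∈ t, M *ᵥ v i := by
  ext p
  rw [Finset.sum_apply p t]
  simp only [Matrix.mulVec, dotProduct, Finset.sum_apply, Finset.mul_sum]
  rw [Finset.sum_comm]

lemma my_dot_mulVec (A : Matrix n m ℝ) (u : n → ℝ) (v : m → ℝ) :
    u ⬝ᵥ A *ᵥ v = (Aᵀ *ᵥ u) ⬝ᵥ v := by
  rw [Matrix.dotProduct_mulVec, ← Matrix.mulVec_transpose]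

lemma my_dot_sum {ι : Type*} (t : Finset ι) (u : n → ℝ) (v : ι → n → ℝ) :
    u ⬝ᵥ (∑ i ∈ t, v i) = ∑ i ∈ t, u ⬝ᵥ v i := by
  simp only [dotProduct, Finset.sum_apply, Finset.mul_sum]
  rw [Finset.sum_comm]

lemma my_sum_dot {ι : Type*} (t : Finset ι) (u : ι → n → ℝ) (v : n → ℝ) :
    (∑ i ∈ t, u i) ⬝ᵥ v = ∑ i ∈ t, u i ⬝ᵥ v := by
  simp only [dotProduct, Finset.sum_apply, Finset.sum_mul]
  rw [Finset.sum_comm]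

end helpers

/-- Dual function of the block-level PM slot-invariant problem: with
`Φ(W̄) = P₁ W̄ + P₂ W̄ P₃` and `Σ = ∑ᵢ (sᵢ sᵢᵀ + P₃ sᵢ sᵢᵀ P₃ᵀ)` positive
definite, the minimum over `W̄` of the Lagrangian
`L(W̄) = ∑ᵢ ‖Φ(W̄) sᵢ‖² + ∑ᵢ λᵢᵀ(bᵢ − Gᵢ Φ(W̄) sᵢ)` equals
`−(1/4) λᵀ U λ + λᵀ b` with the block matrix `U` given by
`U_{i,j} = (sⱼᵀΣ⁻¹sᵢ) GᵢP₁P₁ᵀGⱼᵀ + (sⱼᵀP₃ᵀΣ⁻¹sᵢ) GᵢP₁P₂ᵀGⱼᵀ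
 + (sⱼᵀΣ⁻¹P₃sᵢ) GᵢP₂P₁ᵀGⱼᵀ + (sⱼᵀP₃ᵀΣ⁻¹P₃sᵢ) GᵢP₂P₂ᵀGⱼᵀ`. -/
theorem stmt19 (Nt Nr N : ℕ) (hNt : 0 < Nt) (hNr : 0 < Nr) (hN : 0 < N)
    (P1 P2 : Matrix (Fin Nt ⊕ Fin Nt) (Fin Nt) ℝ)
    (hP1 : ∀ p j, P1 p j =
      Sum.elim (fun a => if a = j then (1 : ℝ) else 0) (fun _ => (0 : ℝ)) p)
    (hP2 : ∀ p j, P2 p j =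
      Sum.elim (fun _ => (0 : ℝ)) (fun a => if a = j then (1 : ℝ) else 0) p)
    (P3 : Matrix (Fin Nr ⊕ Fin Nr) (Fin Nr ⊕ Fin Nr) ℝ)
    (hP3 : P3 = Matrix.fromBlocks 0 1 (-1) 0)
    (G : Fin N → Matrix (Fin Nr ⊕ Fin Nr) (Fin Nt ⊕ Fin Nt) ℝ)
    (s b lam : Fin N → (Fin Nr ⊕ Fin Nr) → ℝ)
    (Phi : Matrix (Fin Nt) (Fin Nr ⊕ Fin Nr) ℝ →
      Matrix (Fin Nt ⊕ Fin Nt) (Fin Nr ⊕ Fin Nr) ℝ)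
    (hPhi : ∀ W, Phi W = P1 * W + P2 * W * P3)
    (Sig : Matrix (Fin Nr ⊕ Fin Nr) (Fin Nr ⊕ Fin Nr) ℝ)
    (hSig : Sig = ∑ i, (Matrix.vecMulVec (s i) (s i) +
        Matrix.vecMulVec (P3.mulVec (s i)) (P3.mulVec (s i))))
    (hposdef : Sig.PosDef)
    (L : Matrix (Fin Nt) (Fin Nr ⊕ Fin Nr) ℝ → ℝ)
    (hL : ∀ W, L W =
      (∑ i, ∑ p, ((Phi W).mulVec (s i) p) ^ 2) +
      ∑ i, ∑ k, lam i k * (b i k - (G i).mulVec ((Phi W).mulVec (s i)) k))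
    (U : Fin N → Fin N →
      Matrix (Fin Nr ⊕ Fin Nr) (Fin Nr ⊕ Fin Nr) ℝ)
    (hU : ∀ i j, U i j =
      (s j ⬝ᵥ Sig⁻¹.mulVec (s i)) •
        (G i * P1 * P1.transpose * (G j).transpose) +
      (P3.mulVec (s j) ⬝ᵥ Sig⁻¹.mulVec (s i)) •
        (G i * P1 * P2.transpose * (G j).transpose) +
      (s j ⬝ᵥ Sig⁻¹.mulVec (P3.mulVec (s i))) •
        (G i * P2 * P1.transpose * (G j).transpose) +
      (P3.mulVec (s j) ⬝ᵥ Sig⁻¹.mulVec (P3.mulVec (s i))) •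
        (G i * P2 * P2.transpose * (G j).transpose)) :
    IsLeast {v : ℝ | ∃ W, v = L W}
      (-(1 / 4) * (∑ i, ∑ j, lam i ⬝ᵥ (U i j).mulVec (lam j)) +
        ∑ i, lam i ⬝ᵥ b i) := by
  classical
  -- abbreviations
  set tv : Fin N → (Fin Nr ⊕ Fin Nr) → ℝ := fun i => P3 *ᵥ s i with htv
  set w1 : Fin N → Fin Nt → ℝ := fun i c => ∑ q, G i q (Sum.inl c) * lam i q with hw1
  set w2 : Fin N → Fin Nt → ℝ := fun i c => ∑ q, G i q (Sum.inr c) * lam i q with hw2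
  set av : Fin Nt → (Fin Nr ⊕ Fin Nr) → ℝ :=
    fun k => ∑ i, (w1 i k • s i + w2 i k • tv i) with hav
  -- basic structure of P1, P2
  have hP1mv : ∀ (u : Fin Nt → ℝ) (p), (P1 *ᵥ u) p = Sum.elim u (fun _ => (0:ℝ)) p := by
    intro u p
    cases p with
    | inl c => simp [Matrix.mulVec, dotProduct, hP1]
    | inr c => simp [Matrix.mulVec, dotProduct, hP1]
  have hP2mv : ∀ (u : Fin Nt → ℝ) (p), (P2 *ᵥ u) p = Sum.elim (fun _ => (0:ℝ)) u p := by
    intro u p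
    cases p with
    | inl c => simp [Matrix.mulVec, dotProduct, hP2]
    | inr c => simp [Matrix.mulVec, dotProduct, hP2]
  -- decomposition of Phi
  have hPhiv : ∀ (W : Matrix (Fin Nt) (Fin Nr ⊕ Fin Nr) ℝ) (v : (Fin Nr ⊕ Fin Nr) → ℝ),
      (Phi W) *ᵥ v = Sum.elim (W *ᵥ v) (W *ᵥ (P3 *ᵥ v)) := by
    intro W v
    funext p
    rw [hPhi, Matrix.add_mulVec]
    have e1 : (P1 * W) *ᵥ v = P1 *ᵥ (W *ᵥ v) := by rw [Matrix.mulVec_mulVec]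
    have e2 : (P2 * W * P3) *ᵥ v = P2 *ᵥ (W *ᵥ (P3 *ᵥ v)) := by
      rw [Matrix.mul_assoc, Matrix.mulVec_mulVec, Matrix.mulVec_mulVec, Matrix.mul_assoc]
    rw [Pi.add_apply, e1, e2, hP1mv, hP2mv]
    cases p <;> simp
  -- (G i * P1) and (G i * P2)
  have hGP1 : ∀ i, G i * P1 = Matrix.of (fun q c => G i q (Sum.inl c)) := by
    intro i; ext q c
    simp [Matrix.mul_apply, hP1, Fintype.sum_sum_type]
  have hGP2 : ∀ i, G i * P2 = Matrix.of (fun q c => G i q (Sum.inr c)) := by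
    intro i; ext q c
    simp [Matrix.mul_apply, hP2, Fintype.sum_sum_type]
  have hw1v : ∀ i, (G i * P1)ᵀ *ᵥ lam i = w1 i := by
    intro i; funext c
    rw [hGP1]
    simp [Matrix.mulVec, dotProduct, hw1]
  have hw2v : ∀ i, (G i * P2)ᵀ *ᵥ lam i = w2 i := by
    intro i; funext c
    rw [hGP2]
    simp [Matrix.mulVec, dotProduct, hw2]
  -- symmetry of Sig and its inverse
  have hSig_sym : Sigᵀ = Sig := hposdef.isHermitian.eq
  have hSiginv_sym : (Sig⁻¹)ᵀ = Sig⁻¹ := by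
    rw [Matrix.transpose_nonsing_inv, hSig_sym]
  -- key1 : structure of L
  have key1 : ∀ W : Matrix (Fin Nt) (Fin Nr ⊕ Fin Nr) ℝ,
      L W = (∑ k, (W k ⬝ᵥ Sig *ᵥ W k - W k ⬝ᵥ av k)) + ∑ i, lam i ⬝ᵥ b i := by
    intro W
    rw [hL]
    -- quadratic part
    have e1 : ∀ i, (∑ p, ((Phi W) *ᵥ (s i)) p ^ 2)
        = ∑ k, ((W k ⬝ᵥ s i) ^ 2 + (W k ⬝ᵥ tv i) ^ 2) := by
      intro i
      rw [hPhiv W (s i)]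
      rw [Fintype.sum_sum_type]
      rw [← Finset.sum_add_distrib]
      rfl
    have e2 : ∀ k, W k ⬝ᵥ Sig *ᵥ W k = ∑ i, ((W k ⬝ᵥ s i) ^ 2 + (W k ⬝ᵥ tv i) ^ 2) := by
      intro k
      rw [hSig, my_sum_mulVec, my_dot_sum]
      refine Finset.sum_congr rfl fun i _ => ?_
      rw [Matrix.add_mulVec, my_vecMulVec_mulVec, my_vecMulVec_mulVec,
        dotProduct_add, dotProduct_smul, dotProduct_smul,
        smul_eq_mul, smul_eq_mul,
        dotProduct_comm (s i) (W k), dotProduct_comm (P3 *ᵥ s i) (W k)]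
      ring_nf
      rfl
    have hquad : (∑ i, ∑ p, ((Phi W) *ᵥ (s i)) p ^ 2) = ∑ k, W k ⬝ᵥ Sig *ᵥ W k := by
      calc (∑ i, ∑ p, ((Phi W) *ᵥ (s i)) p ^ 2)
          = ∑ i, ∑ k, ((W k ⬝ᵥ s i) ^ 2 + (W k ⬝ᵥ tv i) ^ 2) :=
            Finset.sum_congr rfl fun i _ => e1 i
        _ = ∑ k, ∑ i, ((W k ⬝ᵥ s i) ^ 2 + (W k ⬝ᵥ tv i) ^ 2) := Finset.sum_comm
        _ = ∑ k, W k ⬝ᵥ Sig *ᵥ W k := Finset.sum_congr rfl fun k _ => (e2 k).symm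
    -- linear part
    have e4 : ∀ i, lam i ⬝ᵥ (G i *ᵥ ((Phi W) *ᵥ s i))
        = w1 i ⬝ᵥ (W *ᵥ s i) + w2 i ⬝ᵥ (W *ᵥ tv i) := by
      intro i
      rw [hPhiv W (s i)]
      have hsum : (Sum.elim (W *ᵥ s i) (W *ᵥ (P3 *ᵥ s i)) : (Fin Nt ⊕ Fin Nt) → ℝ)
          = P1 *ᵥ (W *ᵥ s i) + P2 *ᵥ (W *ᵥ (P3 *ᵥ s i)) := by
        funext p
        rw [Pi.add_apply, hP1mv, hP2mv]
        cases p <;> simp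
      rw [hsum, Matrix.mulVec_add, dotProduct_add,
        Matrix.mulVec_mulVec (W *ᵥ s i) (G i) P1,
        Matrix.mulVec_mulVec (W *ᵥ (P3 *ᵥ s i)) (G i) P2,
        my_dot_mulVec (G i * P1) (lam i) (W *ᵥ s i),
        my_dot_mulVec (G i * P2) (lam i) (W *ᵥ (P3 *ᵥ s i)), hw1v, hw2v]
    have hlin : (∑ i, ∑ k, lam i k * (b i k - (G i *ᵥ ((Phi W) *ᵥ s i)) k))
        = (∑ i, lam i ⬝ᵥ b i) - ∑ k, W k ⬝ᵥ av k := by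
      have e3 : ∀ i, (∑ k, lam i k * (b i k - (G i *ᵥ ((Phi W) *ᵥ s i)) k))
          = lam i ⬝ᵥ b i - lam i ⬝ᵥ (G i *ᵥ ((Phi W) *ᵥ s i)) := by
        intro i
        simp only [dotProduct, mul_sub]
        rw [Finset.sum_sub_distrib]
      have e5 : (∑ i, (w1 i ⬝ᵥ (W *ᵥ s i) + w2 i ⬝ᵥ (W *ᵥ tv i))) = ∑ k, W k ⬝ᵥ av k := by
        have hav1 : ∀ k, W k ⬝ᵥ av k
            = ∑ i, (w1 i k * (W k ⬝ᵥ s i) + w2 i k * (W k ⬝ᵥ tv i)) := by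
          intro k
          rw [hav]
          rw [my_dot_sum]
          refine Finset.sum_congr rfl fun i _ => ?_
          rw [dotProduct_add, dotProduct_smul, dotProduct_smul,
            smul_eq_mul, smul_eq_mul]
        calc (∑ i, (w1 i ⬝ᵥ (W *ᵥ s i) + w2 i ⬝ᵥ (W *ᵥ tv i)))
            = ∑ i, ∑ k, (w1 i k * (W k ⬝ᵥ s i) + w2 i k * (W k ⬝ᵥ tv i)) := by
              refine Finset.sum_congr rfl fun i _ => ?_
              simp only [dotProduct]
              rw [← Finset.sum_add_distrib]
              rfl
          _ = ∑ k, ∑ i, (w1 i k * (W k ⬝ᵥ s i) + w2 i k * (W k ⬝ᵥ tv i)) := Finset.sum_comm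
          _ = ∑ k, W k ⬝ᵥ av k := Finset.sum_congr rfl fun k _ => (hav1 k).symm
      calc (∑ i, ∑ k, lam i k * (b i k - (G i *ᵥ ((Phi W) *ᵥ s i)) k))
          = ∑ i, (lam i ⬝ᵥ b i - lam i ⬝ᵥ (G i *ᵥ ((Phi W) *ᵥ s i))) :=
            Finset.sum_congr rfl fun i _ => e3 i
        _ = (∑ i, lam i ⬝ᵥ b i) - ∑ i, lam i ⬝ᵥ (G i *ᵥ ((Phi W) *ᵥ s i)) :=
            Finset.sum_sub_distrib _ _
        _ = (∑ i, lam i ⬝ᵥ b i) - ∑ k, W k ⬝ᵥ av k := by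
            rw [show (∑ i, lam i ⬝ᵥ (G i *ᵥ ((Phi W) *ᵥ s i)))
                = ∑ i, (w1 i ⬝ᵥ (W *ᵥ s i) + w2 i ⬝ᵥ (W *ᵥ tv i)) from
              Finset.sum_congr rfl fun i _ => e4 i, e5]
    rw [hquad, hlin]
    rw [Finset.sum_sub_distrib]
    ring
  -- key2 : the value of the dual
  have hU1 : ∀ i j, lam i ⬝ᵥ (G i * P1 * P1ᵀ * (G j)ᵀ) *ᵥ lam j = w1 i ⬝ᵥ w1 j := by
    intro i j
    have h : G i * P1 * P1ᵀ * (G j)ᵀ = (G i * P1) * ((G j) * P1)ᵀ := by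
      rw [Matrix.transpose_mul, ← Matrix.mul_assoc]
    rw [h, my_dot_mul_transpose, hw1v, hw1v]
  have hU2 : ∀ i j, lam i ⬝ᵥ (G i * P1 * P2ᵀ * (G j)ᵀ) *ᵥ lam j = w1 i ⬝ᵥ w2 j := by
    intro i j
    have h : G i * P1 * P2ᵀ * (G j)ᵀ = (G i * P1) * ((G j) * P2)ᵀ := by
      rw [Matrix.transpose_mul, ← Matrix.mul_assoc]
    rw [h, my_dot_mul_transpose, hw1v, hw2v]
  have hU3 : ∀ i j, lam i ⬝ᵥ (G i * P2 * P1ᵀ * (G j)ᵀ) *ᵥ lam j = w2 i ⬝ᵥ w1 j := by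
    intro i j
    have h : G i * P2 * P1ᵀ * (G j)ᵀ = (G i * P2) * ((G j) * P1)ᵀ := by
      rw [Matrix.transpose_mul, ← Matrix.mul_assoc]
    rw [h, my_dot_mul_transpose, hw2v, hw1v]
  have hU4 : ∀ i j, lam i ⬝ᵥ (G i * P2 * P2ᵀ * (G j)ᵀ) *ᵥ lam j = w2 i ⬝ᵥ w2 j := by
    intro i j
    have h : G i * P2 * P2ᵀ * (G j)ᵀ = (G i * P2) * ((G j) * P2)ᵀ := by
      rw [Matrix.transpose_mul, ← Matrix.mul_assoc]
    rw [h, my_dot_mul_transpose, hw2v, hw2v]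
  have hUterm : ∀ i j, lam i ⬝ᵥ (U i j) *ᵥ lam j =
      (s i ⬝ᵥ Sig⁻¹ *ᵥ s j) * (w1 i ⬝ᵥ w1 j) + (s i ⬝ᵥ Sig⁻¹ *ᵥ tv j) * (w1 i ⬝ᵥ w2 j)
      + (tv i ⬝ᵥ Sig⁻¹ *ᵥ s j) * (w2 i ⬝ᵥ w1 j)
      + (tv i ⬝ᵥ Sig⁻¹ *ᵥ tv j) * (w2 i ⬝ᵥ w2 j) := by
    intro i j
    rw [hU]
    rw [Matrix.add_mulVec, Matrix.add_mulVec, Matrix.add_mulVec,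
      dotProduct_add, dotProduct_add, dotProduct_add,
      Matrix.smul_mulVec, Matrix.smul_mulVec, Matrix.smul_mulVec,
      Matrix.smul_mulVec,
      dotProduct_smul, dotProduct_smul, dotProduct_smul,
      dotProduct_smul]
    simp only [smul_eq_mul]
    rw [hU1, hU2, hU3, hU4,
      my_sym_dot _ hSiginv_sym (s j) (s i),
      my_sym_dot _ hSiginv_sym (P3 *ᵥ s j) (s i),
      my_sym_dot _ hSiginv_sym (s j) (P3 *ᵥ s i),
      my_sym_dot _ hSiginv_sym (P3 *ᵥ s j) (P3 *ᵥ s i)]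
  have hav2 : ∀ k, av k ⬝ᵥ Sig⁻¹ *ᵥ av k = ∑ i, ∑ j,
      (w1 i k * w1 j k * (s i ⬝ᵥ Sig⁻¹ *ᵥ s j) + w1 i k * w2 j k * (s i ⬝ᵥ Sig⁻¹ *ᵥ tv j)
       + w2 i k * w1 j k * (tv i ⬝ᵥ Sig⁻¹ *ᵥ s j)
       + w2 i k * w2 j k * (tv i ⬝ᵥ Sig⁻¹ *ᵥ tv j)) := by
    intro k
    calc av k ⬝ᵥ Sig⁻¹ *ᵥ av k
        = ∑ i, ∑ j, (w1 i k • s i + w2 i k • tv i) ⬝ᵥ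
            Sig⁻¹ *ᵥ (w1 j k • s j + w2 j k • tv j) := by
          simp only [hav]
          rw [my_mulVec_sum, my_sum_dot]
          exact Finset.sum_congr rfl fun i _ => my_dot_sum _ _ _
      _ = _ := by
          refine Finset.sum_congr rfl fun i _ => Finset.sum_congr rfl fun j _ => ?_
          rw [Matrix.mulVec_add, Matrix.mulVec_smul, Matrix.mulVec_smul,
            add_dotProduct, smul_dotProduct, smul_dotProduct,
            dotProduct_add, dotProduct_add,
            dotProduct_smul, dotProduct_smul,
            dotProduct_smul, dotProduct_smul]
          simp only [smul_eq_mul, dotProduct, Finset.sum_mul, Finset.mul_sum, mul_add, add_mul]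
          simp only [← Finset.sum_add_distrib]
          apply Finset.sum_congr rfl
          intro x _
          ring
  have key2 : (∑ i, ∑ j, lam i ⬝ᵥ (U i j) *ᵥ lam j)
      = ∑ k, av k ⬝ᵥ Sig⁻¹ *ᵥ av k := by
    calc (∑ i, ∑ j, lam i ⬝ᵥ (U i j) *ᵥ lam j)
        = ∑ i, ∑ j, ∑ k, (w1 i k * w1 j k * (s i ⬝ᵥ Sig⁻¹ *ᵥ s j)
            + w1 i k * w2 j k * (s i ⬝ᵥ Sig⁻¹ *ᵥ tv j)
            + w2 i k * w1 j k * (tv i ⬝ᵥ Sig⁻¹ *ᵥ s j)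
            + w2 i k * w2 j k * (tv i ⬝ᵥ Sig⁻¹ *ᵥ tv j)) := by
          refine Finset.sum_congr rfl fun i _ => Finset.sum_congr rfl fun j _ => ?_
          have hd : ∀ (u v : Fin Nt → ℝ), u ⬝ᵥ v = ∑ k, u k * v k := fun _ _ => rfl
          rw [hUterm i j, hd, hd, hd, hd]
          simp only [Finset.mul_sum]
          simp only [← Finset.sum_add_distrib]
          apply Finset.sum_congr rfl
          intro k _
          ring
      _ = ∑ k, ∑ i, ∑ j, (w1 i k * w1 j k * (s i ⬝ᵥ Sig⁻¹ *ᵥ s j)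
            + w1 i k * w2 j k * (s i ⬝ᵥ Sig⁻¹ *ᵥ tv j)
            + w2 i k * w1 j k * (tv i ⬝ᵥ Sig⁻¹ *ᵥ s j)
            + w2 i k * w2 j k * (tv i ⬝ᵥ Sig⁻¹ *ᵥ tv j)) := by
          trans (∑ i, ∑ k, ∑ j, (w1 i k * w1 j k * (s i ⬝ᵥ Sig⁻¹ *ᵥ s j)
            + w1 i k * w2 j k * (s i ⬝ᵥ Sig⁻¹ *ᵥ tv j)
            + w2 i k * w1 j k * (tv i ⬝ᵥ Sig⁻¹ *ᵥ s j)
            + w2 i k * w2 j k * (tv i ⬝ᵥ Sig⁻¹ *ᵥ tv j)))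
          · exact Finset.sum_congr rfl fun i _ => Finset.sum_comm
          · exact Finset.sum_comm
      _ = ∑ k, av k ⬝ᵥ Sig⁻¹ *ᵥ av k :=
          Finset.sum_congr rfl fun k _ => (hav2 k).symm
  -- final assembly
  have hmin_eq : (-(1 / 4) * (∑ i, ∑ j, lam i ⬝ᵥ (U i j) *ᵥ lam j) + ∑ i, lam i ⬝ᵥ b i)
      = (∑ k, (-(1/4 : ℝ) * (av k ⬝ᵥ Sig⁻¹ *ᵥ av k))) + ∑ i, lam i ⬝ᵥ b i := by
    rw [key2, Finset.mul_sum]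
  constructor
  · refine ⟨Matrix.of fun k => (1/2 : ℝ) • Sig⁻¹ *ᵥ av k, ?_⟩
    rw [hmin_eq, key1]
    congr 1
    refine Finset.sum_congr rfl fun k _ => ?_
    exact (my_quad_eq Sig hposdef (av k)).symm
  · rintro x ⟨W, rfl⟩
    rw [hmin_eq, key1 W]
    apply add_le_add_left
    refine Finset.sum_le_sum fun k _ => ?_
    exact my_quad_lb Sig hposdef (av k) (W k)
end
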